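/- arXiv:1203.3264 — 9 statements merged into one kernel-verified Lean document; each statement's English description precedes it below -/
import Mathlib

section
/- For every non-negative integer n, 4^n equals the sum over i from 0 to n of binom(2i, i) * binom(2(n-i), n-i). -/
/-!
Over `ℚ`, Chu–Vandermonde for generalized binomial coefficients, applied to
`-1 = -1/2 + -1/2`, is the coefficient form of `(1 + x)⁻¹ = (1 + x)^(-1/2) * (1 + x)^(-1/2)`.
Since `choose (-1) n = (-1)ⁿ` and `choose (-1/2) n = (-1/4)ⁿ * centralBinom n`, the factor
`(-1/4)ⁿ` factors out of the convolution.
-/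

open Finset Nat

namespace Ring

variable {R : Type*} [Ring R] [BinomialRing R]

theorem choose_neg_one (n : ℕ) : choose (-1 : R) n = (-1) ^ n := by
  rw [choose_neg, add_sub_cancel_left, choose_natCast, Nat.choose_self, Nat.cast_one,
    Units.smul_def, zsmul_one, Int.cast_negOnePow_natCast]

theorem succ_nsmul_choose_succ (r : R) (n : ℕ) :
    (n + 1) • choose r (n + 1) = choose r n * (r - n) := by
  simpa [Nat.choose_succ_self_right] using choose_smul_choose r (Nat.le_succ n)

theorem choose_neg_half {K : Type*} [Field K] [CharZero K] (n : ℕ) :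
    choose (-1 / 2 : K) n = (-1 / 4) ^ n * centralBinom n := by
  induction n with
  | zero => simp
  | succ n ih =>
    have hrec := succ_nsmul_choose_succ (-1 / 2 : K) n
    have hcentral : ((n + 1 : ℕ) : K) * centralBinom (n + 1) = 2 * (2 * n + 1) * centralBinom n :=
      mod_cast succ_mul_centralBinom_succ n
    rw [ih, nsmul_eq_mul] at hrec
    apply mul_left_cancel₀ (Nat.cast_add_one_ne_zero n)
    push_cast at hrec hcentral ⊢
    rw [hrec]
    linear_combination -(-1 / 4 : K) ^ (n + 1) * hcentral

end Ring

theorem Nat.sum_antidiagonal_centralBinom_mul (n : ℕ) :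
    ∑ ij ∈ antidiagonal n, centralBinom ij.1 * centralBinom ij.2 = 4 ^ n := by
  have hvandermonde := Ring.add_choose_eq (r := (-1 / 2 : ℚ)) (s := -1 / 2) n (Commute.all _ _)
  rw [show (-1 / 2 + -1 / 2 : ℚ) = -1 by norm_num, Ring.choose_neg_one] at hvandermonde
  have hterm : ∀ ij ∈ antidiagonal n, Ring.choose (-1 / 2 : ℚ) ij.1 * Ring.choose (-1 / 2) ij.2 =
      (-1 / 4) ^ n * ((centralBinom ij.1 : ℚ) * centralBinom ij.2) := by
    intro ij hij
    rw [Ring.choose_neg_half, Ring.choose_neg_half, ← mem_antidiagonal.mp hij]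
    ring
  rw [sum_congr rfl hterm, ← mul_sum] at hvandermonde
  qify
  calc _ = ((-4) ^ n * (-1 / 4) ^ n : ℚ) *
        ∑ ij ∈ antidiagonal n, (centralBinom ij.1 : ℚ) * centralBinom ij.2 := by
        rw [← mul_pow]; norm_num
    _ = (-4) ^ n * (-1) ^ n := by rw [mul_assoc, hvandermonde]
    _ = 4 ^ n := by rw [← mul_pow]; norm_num

theorem hajos_identity (n : ℕ) :
    4 ^ n = ∑ i ∈ Finset.range (n + 1),
      Nat.choose (2 * i) i * Nat.choose (2 * (n - i)) (n - i) := by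
  rw [← sum_antidiagonal_centralBinom_mul,
    Finset.Nat.sum_antidiagonal_eq_sum_range_succ (fun i j => centralBinom i * centralBinom j)]
  rfl
end

section
/- For every non-negative integer n, (2n+1) * binom(2n, n) equals the sum over all triples (i, j, k) of non-negative integers with i + j + k = n of binom(2i, i) * binom(2j, j) * binom(2k, k). -/
/-!
With `c n = Nat.centralBinom n`, the generating function `∑ c n xⁿ` is `(1 - 4x)^(-1/2)`.
Its square is `1 / (1 - 4x)`, i.e. `∑_{i+j=n} c i * c j = 4ⁿ`; this is proved by comparing the
convolution weighted by `i` with its mirror image, using `(i + 1) c (i + 1) = 2 (2i + 1) c i`.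
The cube is then `∑_{i+j=n} c i * 4ʲ`, which telescopes to `(2n + 1) c n` by the same recurrence.
-/

open Finset

namespace Nat

theorem two_mul_sum_antidiagonal_fst_mul_centralBinom_mul (n : ℕ) :
    2 * ∑ p ∈ antidiagonal n, p.1 * (p.1.centralBinom * p.2.centralBinom) =
      n * ∑ p ∈ antidiagonal n, p.1.centralBinom * p.2.centralBinom := by
  conv_lhs => rw [two_mul]; enter [2]; rw [← Finset.Nat.sum_antidiagonal_swap]
  rw [← sum_add_distrib, mul_sum]
  refine sum_congr rfl fun p hp => ?_
  rw [HasAntidiagonal.mem_antidiagonal] at hp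
  simp only [Prod.fst_swap, Prod.snd_swap, ← hp]
  ring

theorem sum_antidiagonal_succ_fst_mul_centralBinom_mul (n : ℕ) :
    ∑ p ∈ antidiagonal (n + 1), p.1 * (p.1.centralBinom * p.2.centralBinom) =
      4 * ∑ p ∈ antidiagonal n, p.1 * (p.1.centralBinom * p.2.centralBinom) +
        2 * ∑ p ∈ antidiagonal n, p.1.centralBinom * p.2.centralBinom := by
  rw [Finset.Nat.sum_antidiagonal_succ, zero_mul, zero_add, mul_sum, mul_sum, ← sum_add_distrib]
  refine sum_congr rfl fun p _ => ?_
  rw [← mul_assoc, succ_mul_centralBinom_succ]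
  ring

theorem sum_antidiagonal_centralBinom_mul_centralBinom (n : ℕ) :
    ∑ p ∈ antidiagonal n, p.1.centralBinom * p.2.centralBinom = 4 ^ n := by
  induction n with
  | zero => simp
  | succ n ih =>
    refine Nat.eq_of_mul_eq_mul_left n.add_one_pos ?_
    have weighted := two_mul_sum_antidiagonal_fst_mul_centralBinom_mul n
    rw [← two_mul_sum_antidiagonal_fst_mul_centralBinom_mul,
      sum_antidiagonal_succ_fst_mul_centralBinom_mul, pow_succ]
    linear_combination 4 * weighted + (4 * n + 4) * ih

theorem sum_antidiagonal_centralBinom_mul_four_pow (n : ℕ) :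
    ∑ p ∈ antidiagonal n, p.1.centralBinom * 4 ^ p.2 = (2 * n + 1) * n.centralBinom := by
  induction n with
  | zero => simp
  | succ n ih =>
    simp only [Finset.Nat.sum_antidiagonal_succ', pow_zero, mul_one, pow_succ, ← mul_assoc,
      ← sum_mul, ih]
    linear_combination 2 * (succ_mul_centralBinom_succ n).symm

end Nat

theorem triple_convolution_identity (n : ℕ) :
    (2 * n + 1) * Nat.choose (2 * n) n =
      ∑ p ∈ Finset.HasAntidiagonal.antidiagonal n, ∑ q ∈ Finset.HasAntidiagonal.antidiagonal p.2,
        Nat.choose (2 * p.1) p.1 * Nat.choose (2 * q.1) q.1 *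
          Nat.choose (2 * q.2) q.2 := by
  simp_rw [← Nat.centralBinom_eq_two_mul_choose, mul_assoc, ← mul_sum,
    Nat.sum_antidiagonal_centralBinom_mul_centralBinom, Nat.sum_antidiagonal_centralBinom_mul_four_pow]
end

section
/- The number of northeastern lattice paths with 2n steps starting at (0,0) and ending at (n,n) equals the number of northeastern lattice paths with 2n steps starting at (0,0) that never touch the line x = y after the starting point. -/
/-!
A path that avoids the diagonal after its start stays strictly on one side of it, so after
deleting the first step (and mirroring if that step is north) it is a ballot sequence: no prefix
has more north than east steps. Hence the avoiding paths of length `2n` are twice the ballot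
sequences of length `2n - 1`. Ballot sequences of length `m` with at least `j` east steps obey
Pascal's recurrence as long as `m ≤ 2j + 1`, so there are `C(m, j)` of them; for `m = 2n - 1`,
`j = n - 1` this gives `2 C(2n - 1, n - 1) = C(2n, n)`.
-/

/-- A northeastern lattice path is a word over `{N, E}`, encoded as a
`List Bool` with `true` = east step, `false` = north step. -/
abbrev NEPath := List Bool

/-- The path (started at `(0,0)`) touches the line `x = y` strictly after its
starting point: some nonempty prefix has equally many east and north steps. -/
def touchesDiagonal (w : NEPath) : Prop :=
  ∃ t, 0 < t ∧ t ≤ w.length ∧ (w.take t).count true = (w.take t).count false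

section Words

variable {α : Type*}

instance finite_length_eq_and [Finite α] (m : ℕ) (P : List α → Prop) :
    Finite {w : List α // w.length = m ∧ P w} :=
  ((List.finite_length_eq α m).subset fun _ h => h.1).to_subtype

open scoped Classical in
theorem natCard_length_zero (P : List α → Prop) :
    Nat.card {w : List α // w.length = 0 ∧ P w} = if P [] then 1 else 0 := by
  simp only [List.length_eq_zero_iff]
  split_ifs with h
  · exact Nat.card_eq_one_iff_exists.mpr ⟨⟨[], rfl, h⟩, fun w => Subtype.ext w.2.1⟩
  · have : IsEmpty {w : List α // w = [] ∧ P w} := ⟨fun w => h (w.2.1 ▸ w.2.2)⟩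
    exact Nat.card_of_isEmpty

theorem natCard_length_succ_cons [Fintype α] (m : ℕ) (P : List α → Prop) :
    Nat.card {w : List α // w.length = m + 1 ∧ P w} =
      ∑ a, Nat.card {u : List α // u.length = m ∧ P (a :: u)} := by
  rw [← Nat.card_sigma]
  exact Nat.card_congr
    { toFun := fun w => ⟨w.1.head (List.ne_nil_of_length_eq_add_one w.2.1), w.1.tail,
        by simp [w.2.1], by rw [List.cons_head_tail]; exact w.2.2⟩
      invFun := fun p => ⟨p.1 :: p.2.1, by simp [p.2.2.1], p.2.2.2⟩
      left_inv := fun w => Subtype.ext (List.cons_head_tail _)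
      right_inv := fun p => Sigma.subtype_ext rfl rfl }

theorem natCard_length_succ_snoc [Fintype α] (m : ℕ) (P : List α → Prop) :
    Nat.card {w : List α // w.length = m + 1 ∧ P w} =
      ∑ a, Nat.card {u : List α // u.length = m ∧ P (u ++ [a])} := by
  rw [← Nat.card_sigma]
  exact Nat.card_congr
    { toFun := fun w => ⟨w.1.getLast (List.ne_nil_of_length_eq_add_one w.2.1), w.1.dropLast,
        by simp [w.2.1], by rw [List.dropLast_append_getLast]; exact w.2.2⟩
      invFun := fun p => ⟨p.2.1 ++ [p.1], by simp [p.2.2.1], p.2.2.2⟩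
      left_inv := fun w => Subtype.ext (List.dropLast_append_getLast _)
      right_inv := fun p =>
        Sigma.subtype_ext (List.getLast_append_singleton _) List.dropLast_concat }

theorem natCard_length_congr {P Q : List α → Prop} {m : ℕ}
    (h : ∀ w : List α, w.length = m → (P w ↔ Q w)) :
    Nat.card {w : List α // w.length = m ∧ P w} =
      Nat.card {w : List α // w.length = m ∧ Q w} :=
  Nat.card_congr (Equiv.subtypeEquivRight fun w => and_congr_right (h w))

end Words

def IsBallot (w : List Bool) : Prop :=
  ∀ p, p <+: w → p.count false ≤ p.count true

theorem isBallot_nil : IsBallot [] := fun p hp => by simp [List.prefix_nil.mp hp]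

theorem isBallot_append_singleton {w : List Bool} {a : Bool} :
    IsBallot (w ++ [a]) ↔ IsBallot w ∧ (w ++ [a]).count false ≤ (w ++ [a]).count true := by
  simp only [IsBallot, List.prefix_concat_iff, or_imp, forall_and, forall_eq]
  exact and_comm

theorem IsBallot.count_false_le {w : List Bool} (h : IsBallot w) : w.count false ≤ w.count true :=
  h w (List.prefix_refl w)

theorem IsBallot.length_le {w : List Bool} (h : IsBallot w) : w.length ≤ 2 * w.count true := by
  have := h.count_false_le
  have := List.count_true_add_count_false w
  omega

-- `count false - count true` moves by one per step, so it cannot skip the value `1`.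
theorem isBallot_iff_forall_prefix_count_false_ne {w : List Bool} :
    IsBallot w ↔ ∀ p, p <+: w → p.count false ≠ p.count true + 1 := by
  induction w using List.reverseRecOn with
  | nil => simp [isBallot_nil, List.prefix_nil]
  | append_singleton w a ih =>
    simp only [isBallot_append_singleton, List.prefix_concat_iff, or_imp, forall_and, forall_eq,
      ← ih]
    rw [and_comm (b := IsBallot w)]
    refine and_congr_right fun hw => ?_
    have := hw.count_false_le
    cases a <;> simp <;> omega

theorem touchesDiagonal_true_cons_iff {v : List Bool} :
    touchesDiagonal (true :: v) ↔ ∃ p, p <+: v ∧ p.count false = p.count true + 1 := by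
  constructor
  · rintro ⟨_ | s, hs, -, heq⟩
    · omega
    · refine ⟨v.take s, List.take_prefix s v, ?_⟩
      simp at heq
      omega
  · rintro ⟨p, hp, heq⟩
    refine ⟨p.length + 1, by omega, by simpa using hp.length_le, ?_⟩
    rw [List.take_succ_cons, ← List.prefix_iff_eq_take.mp hp]
    simp
    omega

theorem not_touchesDiagonal_true_cons {v : List Bool} :
    ¬ touchesDiagonal (true :: v) ↔ IsBallot v := by
  simp [touchesDiagonal_true_cons_iff, isBallot_iff_forall_prefix_count_false_ne]

theorem touchesDiagonal_map_not {w : List Bool} :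
    touchesDiagonal (w.map not) ↔ touchesDiagonal w := by
  have count_true (l : List Bool) : (l.map not).count true = l.count false :=
    List.count_map_of_injective l not Bool.not_injective false
  have count_false (l : List Bool) : (l.map not).count false = l.count true :=
    List.count_map_of_injective l not Bool.not_injective true
  simp only [touchesDiagonal, List.length_map, ← List.map_take, count_true, count_false]
  exact exists_congr fun t => by rw [eq_comm]

theorem not_touchesDiagonal_false_cons {v : List Bool} :
    ¬ touchesDiagonal (false :: v) ↔ IsBallot (v.map not) := by
  rw [← not_touchesDiagonal_true_cons, ← touchesDiagonal_map_not]
  simp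

theorem natCard_count_true_eq_choose (m j : ℕ) :
    Nat.card {w : List Bool // w.length = m ∧ w.count true = j} = m.choose j := by
  induction m generalizing j with
  | zero => rw [natCard_length_zero]; cases j <;> simp
  | succ m ih =>
    rw [natCard_length_succ_cons, Fintype.sum_bool]
    cases j with
    | zero => simp [ih]
    | succ k => simp [ih, Nat.choose_succ_succ]

noncomputable def ballotCount (m j : ℕ) : ℕ :=
  Nat.card {w : List Bool // w.length = m ∧ IsBallot w ∧ j ≤ w.count true}

theorem ballotCount_succ_succ {m j : ℕ} (hm : m ≤ 2 * j + 1) :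
    ballotCount (m + 1) (j + 1) = ballotCount m j + ballotCount m (j + 1) := by
  rw [ballotCount, natCard_length_succ_snoc, Fintype.sum_bool]
  -- Appending `false` keeps the ballot property: at least `j + 1` trues against at most `j` falses.
  congr 1 <;> refine natCard_length_congr fun w hw => ?_ <;>
    rw [isBallot_append_singleton, and_assoc] <;> refine and_congr_right fun hb => ?_
  all_goals
    have := hb.count_false_le
    have := List.count_true_add_count_false w
    simp
    omega

theorem ballotCount_eq_ballotCount_succ {m j : ℕ} (h : 2 * j < m) :
    ballotCount m j = ballotCount m (j + 1) :=
  natCard_length_congr fun w hw => and_congr_right fun hb => by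
    have := hb.length_le
    omega

theorem ballotCount_eq_choose (m j : ℕ) (h : m ≤ 2 * j + 1) : ballotCount m j = m.choose j := by
  induction m generalizing j with
  | zero => rw [ballotCount, natCard_length_zero]; cases j <;> simp [isBallot_nil]
  | succ m ih =>
    have pascal (k : ℕ) (hk : m ≤ 2 * k + 1) :
        ballotCount (m + 1) (k + 1) = (m + 1).choose (k + 1) := by
      rw [ballotCount_succ_succ hk, ih k hk, ih (k + 1) (by omega), Nat.choose_succ_succ]
    by_cases hj : m + 1 ≤ 2 * j
    · obtain ⟨k, rfl⟩ : ∃ k, j = k + 1 := Nat.exists_eq_add_one.mpr (by omega)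
      exact pascal k (by omega)
    · obtain rfl : m = 2 * j := by omega
      rw [ballotCount_eq_ballotCount_succ (by omega), pascal j (by omega), Nat.choose_symm_half]

theorem natCard_isBallot (m : ℕ) :
    Nat.card {w : List Bool // w.length = m ∧ IsBallot w} = m.choose (m / 2) := by
  rw [← ballotCount_eq_choose m (m / 2) (by omega)]
  refine natCard_length_congr fun w hw => (and_iff_left_of_imp fun hb => ?_).symm
  have := hb.length_le
  omega

theorem natCard_not_touchesDiagonal_succ (m : ℕ) :
    Nat.card {w : NEPath // w.length = m + 1 ∧ ¬ touchesDiagonal w} =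
      2 * Nat.card {w : List Bool // w.length = m ∧ IsBallot w} := by
  rw [natCard_length_succ_cons, Fintype.sum_bool, two_mul]
  simp only [not_touchesDiagonal_true_cons, not_touchesDiagonal_false_cons]
  congr 1
  exact Nat.card_congr <|
    (Function.Involutive.toPerm (List.map not) Bool.involutive_not.list_map).subtypeEquiv
      fun w => by simp

theorem hajos_path_bijection_count (n : ℕ) :
    Nat.card {w : NEPath // w.length = 2 * n ∧ w.count true = n} =
    Nat.card {w : NEPath // w.length = 2 * n ∧ ¬ touchesDiagonal w} := by
  rw [natCard_count_true_eq_choose]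
  rcases n with _ | k
  · rw [natCard_length_zero, if_pos (by simp [touchesDiagonal])]
    rfl
  · rw [show 2 * (k + 1) = 2 * k + 1 + 1 by ring, natCard_not_touchesDiagonal_succ,
      natCard_isBallot, show (2 * k + 1) / 2 = k by omega, Nat.choose_succ_succ,
      Nat.choose_symm_half]
    ring
end

section
/- For every non-negative integer n, the number of words of length 2n over {N,E} whose every nonempty prefix has strictly more E's than N's equals binom(2n, n) / 2 when n ≥ 1, equivalently equals the number of northeastern lattice paths from (0,0) to (n,n) starting with an east step. -/
/-- Words over `{N, E}` encoded as `List Bool`, `true` = E, `false` = N. -/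
abbrev NEWord := List Bool

/-- Every nonempty prefix has strictly more E's than N's. -/
def strictlyBelowDiag (w : NEWord) : Prop :=
  ∀ t, 0 < t → t ≤ w.length → (w.take t).count false < (w.take t).count true

/-!
Read `true` as a step `+1` and `false` as a step `-1`. A word is strictly below the diagonal iff
it starts with `true` and the remaining walk of length `2n - 1` never drops below height `0`.
As in the reflection principle, the walks of length `m` started at height `c ≥ 0` that never drop
below `0` are equinumerous with the walks whose final height lies in `[-c - 1, c]`: both counts
obey the same recursion in `(m, c)`. For `m = 2n - 1` and `c = 0` the final height is odd, hence
`-1`, so there are `(2n-1).choose (n-1) = (2n).choose n / 2` such walks, exactly as many as words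
of length `2n` with `n` letters `true` that start with `true`.
-/

open Finset

def words : ℕ → Finset (List Bool)
  | 0 => {[]}
  | m + 1 => (words m).image (true :: ·) ∪ (words m).image (false :: ·)

@[simp]
lemma mem_words {m : ℕ} {w : List Bool} : w ∈ words m ↔ w.length = m := by
  induction m generalizing w with
  | zero => simp [words]
  | succ m ih =>
    cases w with
    | nil => simp [words]
    | cons b v => cases b <;> simp [words, ih]

lemma card_filter_words_succ (p : List Bool → Prop) [DecidablePred p] (m : ℕ) :
    #((words (m + 1)).filter p) =
      #((words m).filter fun w => p (true :: w)) +
        #((words m).filter fun w => p (false :: w)) := by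
  have disj : Disjoint ((words m).image (true :: ·)) ((words m).image (false :: ·)) := by
    simp [disjoint_left]
  rw [words, filter_union,
    card_union_of_disjoint (disj.mono (filter_subset _ _) (filter_subset _ _)),
    filter_image, filter_image, card_image_of_injective _ (List.cons_injective),
    card_image_of_injective _ (List.cons_injective)]

lemma card_filter_words_succ_of_forall_not_false (p : List Bool → Prop) [DecidablePred p]
    (m : ℕ) (hp : ∀ w, ¬ p (false :: w)) :
    #((words (m + 1)).filter p) = #((words m).filter fun w => p (true :: w)) := by
  simp [card_filter_words_succ, hp]

lemma natCard_eq_card_filter_words (p : List Bool → Prop) [DecidablePred p] (m : ℕ) :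
    Nat.card {w : List Bool // w.length = m ∧ p w} = #((words m).filter p) := by
  rw [← Nat.card_eq_finsetCard]
  exact Nat.card_congr (Equiv.subtypeEquivRight fun w => by simp)

lemma card_filter_count_true_eq (m k : ℕ) :
    #((words m).filter fun w => w.count true = k) = m.choose k := by
  induction m generalizing k with
  | zero => cases k <;> simp [words, filter_singleton]
  | succ m ih =>
    rw [card_filter_words_succ]
    cases k with
    | zero => simp [ih]
    | succ k => simp [ih, Nat.choose_succ_succ']

def height (w : List Bool) : ℤ := w.count true - w.count false

@[simp]
lemma height_nil : height [] = 0 := rfl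

@[simp]
lemma height_cons (b : Bool) (w : List Bool) :
    height (b :: w) = height w + if b then 1 else -1 := by
  cases b <;> simp [height] <;> ring

def StaysNonneg (c : ℤ) (w : List Bool) : Prop :=
  ∀ t ≤ w.length, 0 ≤ c + height (w.take t)

instance (c : ℤ) : DecidablePred (StaysNonneg c) :=
  fun w => inferInstanceAs (Decidable (∀ t ≤ w.length, _))

lemma StaysNonneg.nonneg {c : ℤ} {w : List Bool} (h : StaysNonneg c w) : 0 ≤ c := by
  simpa using h 0 (Nat.zero_le _)

lemma staysNonneg_cons {c : ℤ} {b : Bool} {w : List Bool} :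
    StaysNonneg c (b :: w) ↔ 0 ≤ c ∧ StaysNonneg (c + if b then 1 else -1) w := by
  refine ⟨fun h => ⟨h.nonneg, fun t ht => ?_⟩, fun ⟨hc, h⟩ t ht => ?_⟩
  · have := h (t + 1) (by simpa using ht)
    simp only [List.take_succ_cons, height_cons] at this
    linarith
  · cases t with
    | zero => simpa using hc
    | succ t =>
      have := h t (by simpa using ht)
      simp only [List.take_succ_cons, height_cons]
      linarith

lemma strictlyBelowDiag_cons_iff {b : Bool} {w : List Bool} :
    strictlyBelowDiag (b :: w) ↔ StaysNonneg ((if b then 1 else -1) - 1) w := by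
  have key : ∀ t, (((b :: w).take t).count false < ((b :: w).take t).count true ↔
      0 < height ((b :: w).take t)) := fun t => by simp only [height]; omega
  refine ⟨fun h t ht => ?_, fun h t ht0 ht => ?_⟩
  · have := (key (t + 1)).1 (h (t + 1) (by omega) (by simpa using ht))
    simp only [List.take_succ_cons, height_cons] at this
    linarith
  · obtain ⟨t, rfl⟩ := Nat.exists_eq_add_one_of_ne_zero ht0.ne'
    have := h t (by simpa using ht)
    rw [key, List.take_succ_cons, height_cons]
    linarith

def nonnegCount (m : ℕ) (c : ℤ) : ℕ := #((words m).filter (StaysNonneg c))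

def windowCount (m : ℕ) (a b : ℤ) : ℕ :=
  #((words m).filter fun w => a ≤ height w ∧ height w ≤ b)

lemma nonnegCount_zero (c : ℤ) : nonnegCount 0 c = if 0 ≤ c then 1 else 0 := by
  by_cases hc : 0 ≤ c <;> simp [nonnegCount, words, filter_singleton, StaysNonneg, hc]

lemma nonnegCount_succ (m : ℕ) (c : ℤ) :
    nonnegCount (m + 1) c =
      if 0 ≤ c then nonnegCount m (c + 1) + nonnegCount m (c - 1) else 0 := by
  split_ifs with hc
  · simp [nonnegCount, card_filter_words_succ, staysNonneg_cons, hc, sub_eq_add_neg]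
  · simpa [nonnegCount, filter_eq_empty_iff] using fun w _ h => hc h.nonneg

lemma windowCount_zero (a b : ℤ) : windowCount 0 a b = if a ≤ 0 ∧ 0 ≤ b then 1 else 0 := by
  by_cases h : a ≤ 0 ∧ 0 ≤ b <;>
    simp only [windowCount, words, filter_singleton, height_nil, h] <;> rfl

lemma windowCount_succ (m : ℕ) (a b : ℤ) :
    windowCount (m + 1) a b =
      windowCount m (a - 1) (b - 1) + windowCount m (a + 1) (b + 1) := by
  rw [windowCount, card_filter_words_succ]
  congr 2 <;> refine filter_congr fun w _ => ?_ <;>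
    simp only [height_cons, ↓reduceIte, Bool.false_eq_true] <;> omega

lemma windowCount_of_lt {m : ℕ} {a b : ℤ} (h : b < a) : windowCount m a b = 0 := by
  simpa [windowCount, filter_eq_empty_iff] using fun w _ h₁ => h.trans_le h₁ |>.not_ge

lemma windowCount_add {m : ℕ} {a b c : ℤ} (hab : a ≤ b + 1) (hbc : b ≤ c) :
    windowCount m a c = windowCount m a b + windowCount m (b + 1) c := by
  rw [windowCount, ← card_filter_add_card_filter_not (fun w => height w ≤ b), filter_filter,
    filter_filter]
  congr 2 <;> refine filter_congr fun w _ => ?_ <;> omega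

theorem nonnegCount_eq_windowCount (m : ℕ) (c : ℤ) :
    nonnegCount m c = windowCount m (-c - 1) c := by
  induction m generalizing c with
  | zero =>
    rw [nonnegCount_zero, windowCount_zero]
    split_ifs <;> omega
  | succ m ih =>
    rcases lt_or_ge c 0 with hc | hc
    · rw [nonnegCount_succ, if_neg hc.not_ge, windowCount_of_lt (by omega)]
    · -- Both windows `[-c - 2, c + 1]` and `[-c, c + 1]` split off the same piece `[c, c + 1]`.
      rw [nonnegCount_succ, if_pos hc, windowCount_succ, ih, ih,
        windowCount_add (a := -(c + 1) - 1) (b := c - 1) (by omega) (by omega),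
        windowCount_add (a := -c - 1 + 1) (b := c - 1) (by omega) (by omega),
        show -(c + 1) - 1 = -c - 1 - 1 by ring, show -(c - 1) - 1 = -c - 1 + 1 by ring]
      ring

lemma windowCount_two_mul_add_one (k : ℕ) :
    windowCount (2 * k + 1) (-1) 0 = (2 * k + 1).choose k := by
  rw [windowCount, ← card_filter_count_true_eq]
  refine congrArg card (filter_congr fun w hw => ?_)
  have := List.count_true_add_count_false w
  simp only [mem_words] at hw
  simp only [height]
  omega

lemma natCard_strictlyBelowDiag (m : ℕ) :
    Nat.card {w : NEWord // w.length = m + 1 ∧ strictlyBelowDiag w} = nonnegCount m 0 := by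
  classical
  have not_false : ∀ w, ¬ strictlyBelowDiag (false :: w) := fun w h => by
    simpa using (strictlyBelowDiag_cons_iff.1 h).nonneg
  rw [natCard_eq_card_filter_words, card_filter_words_succ_of_forall_not_false _ _ not_false,
    nonnegCount]
  exact congrArg card (filter_congr fun w _ => by simp [strictlyBelowDiag_cons_iff])

lemma natCard_head_true_count_true (m k : ℕ) :
    Nat.card {w : NEWord // w.length = m + 1 ∧ w.count true = k + 1 ∧ w.head? = some true} =
      m.choose k := by
  rw [natCard_eq_card_filter_words, card_filter_words_succ_of_forall_not_false _ _ (by simp),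
    ← card_filter_count_true_eq]
  exact congrArg card (filter_congr fun w _ => by simp)

theorem strictly_below_count (n : ℕ) (hn : 1 ≤ n) :
    Nat.card {w : NEWord // w.length = 2 * n ∧ strictlyBelowDiag w} =
      Nat.choose (2 * n) n / 2 ∧
    Nat.card {w : NEWord // w.length = 2 * n ∧ strictlyBelowDiag w} =
      Nat.card {w : NEWord // w.length = 2 * n ∧ w.count true = n ∧
        w.head? = some true} := by
  obtain ⟨k, rfl⟩ := Nat.exists_eq_add_of_le' hn
  have central : (2 * k + 1 + 1).choose (k + 1) = 2 * (2 * k + 1).choose k := by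
    rw [Nat.choose_succ_succ', Nat.choose_symm_half]
    ring
  rw [show 2 * (k + 1) = 2 * k + 1 + 1 by ring, natCard_strictlyBelowDiag,
    natCard_head_true_count_true, nonnegCount_eq_windowCount, neg_zero, zero_sub,
    windowCount_two_mul_add_one, central]
  omega
end

section
/- The number of pairs (A, B) where A and B are Dyck-type balanced sequences (lattice paths with steps (1,1) and (1,-1), with equal numbers of up and down steps, total n up-steps between them) equals the number of pairs (H, X) where H is such a balanced path with n up steps and n down steps from (0,0) to (2n,0), and X is a point of H lying on the horizontal axis. -/
/-- An up-down lattice path, encoded as a `List Bool` with `true` = up step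
`(1,1)` and `false` = down step `(1,-1)`. -/
abbrev UDPath := List Bool

/-- The path is balanced: equally many up and down steps. -/
def IsBalanced (w : UDPath) : Prop := w.count true = w.count false

/-- The lattice point of the path reached after `t` steps lies on the
horizontal axis (height `0`). -/
def OnAxisAt (w : UDPath) (t : ℕ) : Prop :=
  (w.take t).count true = (w.take t).count false

lemma len_eq_counts (w : List Bool) : w.length = w.count true + w.count false := by
  induction w with
  | nil => rfl
  | cons a l ih =>
    rw [List.length_cons, List.count_cons, List.count_cons, ih]
    cases a <;> simp <;> omega

/-- The splitting/concatenation bijection. -/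
def pathEquiv (n : ℕ) :
    {p : UDPath × UDPath //
        IsBalanced p.1 ∧ IsBalanced p.2 ∧ p.1.count true + p.2.count true = n} ≃
    {q : UDPath × ℕ //
        q.1.length = 2 * n ∧ IsBalanced q.1 ∧ q.2 ≤ 2 * n ∧
          OnAxisAt q.1 q.2} where
  toFun := fun ⟨⟨A, B⟩, hA, hB, hn⟩ => ⟨(A ++ B, A.length), by
    dsimp only at hA hB hn
    have hlA := len_eq_counts A
    have hlB := len_eq_counts B
    simp only [IsBalanced] at hA hB
    refine ⟨?_, ?_, ?_, ?_⟩
    · simp only [List.length_append]; omega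
    · simp only [IsBalanced, List.count_append]; omega
    · omega
    · simp only [OnAxisAt, List.take_left]; exact hA⟩
  invFun := fun ⟨⟨H, t⟩, hlen, hbal, ht, hax⟩ => ⟨(H.take t, H.drop t), by
    dsimp only at hlen hbal ht hax
    have h1 : (H.take t).count true + (H.drop t).count true = H.count true := by
      rw [← List.count_append, List.take_append_drop]
    have h2 : (H.take t).count false + (H.drop t).count false = H.count false := by
      rw [← List.count_append, List.take_append_drop]
    have hlH := len_eq_counts H
    simp only [IsBalanced] at hbal ⊢
    simp only [OnAxisAt] at hax
    exact ⟨hax, by omega, by omega⟩⟩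
  left_inv := fun ⟨⟨A, B⟩, hA, hB, hn⟩ => by
    apply Subtype.ext
    simp [List.take_left, List.drop_left]
  right_inv := fun ⟨⟨H, t⟩, hlen, hbal, ht, hax⟩ => by
    apply Subtype.ext
    dsimp only at hlen hbal ht hax ⊢
    have h : (H.take t).length = t := by
      rw [List.length_take]; omega
    rw [Prod.mk.injEq]
    exact ⟨List.take_append_drop t H, h⟩

theorem pairs_eq_marked_on_axis (n : ℕ) :
    Nat.card {p : UDPath × UDPath //
        IsBalanced p.1 ∧ IsBalanced p.2 ∧ p.1.count true + p.2.count true = n} =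
    Nat.card {q : UDPath × ℕ //
        q.1.length = 2 * n ∧ IsBalanced q.1 ∧ q.2 ≤ 2 * n ∧
          OnAxisAt q.1 q.2} := by
  exact Nat.card_congr (pathEquiv n)
end

section
/- For every non-negative integer n, the sum over i from 0 to n of binom(2i, i) * binom(2(n-i), n-i) equals the number of pairs (H, X), where H is a lattice path from (0,0) to (2n,0) with steps (1,1) and (1,-1), and X is a lattice point of H lying on the horizontal axis. -/
open Finset

lemma List.count_true_ofFn {L : ℕ} (f : Fin L → Bool) :
    (List.ofFn f).count true = #{i | f i = true} := by
  induction L with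
  | zero => simp
  | succ L ih =>
    rw [List.ofFn_succ, List.count_cons, ih, card_filter, card_filter, Fin.sum_univ_succ]
    cases f 0 <;> simp [add_comm]

/-- A word of length `L` over `Bool` is the indicator of the set of positions carrying `true`. -/
def boolListEquivFinset (L k : ℕ) :
    {w : List Bool // w.length = L ∧ w.count true = k} ≃ {s : Finset (Fin L) // #s = k} where
  toFun w := ⟨({i : Fin L | w.1[i.1]'(i.2.trans_eq w.2.1.symm) = true} : Finset (Fin L)), by
    obtain ⟨w, rfl, rfl⟩ := w
    conv_rhs => rw [← List.ofFn_getElem (xs := w)]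
    rw [List.count_true_ofFn]⟩
  invFun s := ⟨List.ofFn (fun i => decide (i ∈ s.1)), by simp [List.count_true_ofFn, s.2]⟩
  left_inv := by
    rintro ⟨w, rfl, rfl⟩
    ext1
    conv_rhs => rw [← List.ofFn_getElem (xs := w)]
    simp
  right_inv s := by ext; simp

lemma natCard_boolList_count_true (L k : ℕ) :
    Nat.card {w : List Bool // w.length = L ∧ w.count true = k} = L.choose k := by
  rw [Nat.card_congr (boolListEquivFinset L k), Nat.card_eq_fintype_card,
    Fintype.card_finset_len, Fintype.card_fin]

namespace IsBalanced

variable {u v w : UDPath}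

lemma length_eq (h : IsBalanced w) : w.length = 2 * w.count true := by
  rw [← List.count_true_add_count_false w, ← h, two_mul]

lemma append (hu : IsBalanced u) (hv : IsBalanced v) : IsBalanced (u ++ v) := by
  unfold IsBalanced at *
  rw [List.count_append, List.count_append, hu, hv]

lemma drop (h : IsBalanced w) {t : ℕ} (ht : OnAxisAt w t) : IsBalanced (w.drop t) := by
  rw [← List.take_append_drop t w] at h
  unfold IsBalanced OnAxisAt at *
  rw [List.count_append, List.count_append] at h
  omega

end IsBalanced

def BalancedPath (m : ℕ) : Type := {w : UDPath // w.length = 2 * m ∧ IsBalanced w}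

lemma isBalanced_iff_count_true {m : ℕ} {w : UDPath} (hw : w.length = 2 * m) :
    IsBalanced w ↔ w.count true = m := by
  have := List.count_true_add_count_false w
  unfold IsBalanced
  omega

lemma natCard_balancedPath (m : ℕ) : Nat.card (BalancedPath m) = (2 * m).choose m := by
  rw [← natCard_boolList_count_true]
  exact Nat.card_congr <| Equiv.subtypeEquivRight fun w =>
    and_congr_right fun hw => isBalanced_iff_count_true hw

instance (m : ℕ) : Finite (BalancedPath m) :=
  Nat.finite_of_card_ne_zero <| (natCard_balancedPath m).trans_ne (Nat.choose_pos (by omega)).ne'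

lemma splitPath_ext {n : ℕ} {i j : Fin (n + 1)} {p : BalancedPath i × BalancedPath (n - i)}
    {q : BalancedPath j × BalancedPath (n - j)} (hij : i = j) (h₁ : p.1.1 = q.1.1)
    (h₂ : p.2.1 = q.2.1) :
    (⟨i, p⟩ : Σ i : Fin (n + 1), BalancedPath i × BalancedPath (n - i)) = ⟨j, q⟩ := by
  subst hij
  exact Sigma.ext rfl (heq_of_eq (Prod.ext (Subtype.ext h₁) (Subtype.ext h₂)))

/-- The pairs `(H, X)` of the statement, `X` being recorded as the number of steps before it. -/
def MarkedPath (n : ℕ) : Type :=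
  {q : UDPath × ℕ // q.1.length = 2 * n ∧ IsBalanced q.1 ∧ q.2 ≤ 2 * n ∧ OnAxisAt q.1 q.2}

/-- Cutting at the mark, with `i` the number of up steps before it. -/
def markedPathEquivSigma (n : ℕ) :
    MarkedPath n ≃ Σ i : Fin (n + 1), BalancedPath i × BalancedPath (n - i) where
  toFun := fun ⟨q, hl, hb, ht, ha⟩ =>
    have hsum : (q.1.take q.2).count true + (q.1.drop q.2).count true = n := by
      rw [← List.count_append, List.take_append_drop]
      have := hb.length_eq
      omega
    ⟨⟨(q.1.take q.2).count true, by omega⟩, ⟨q.1.take q.2, IsBalanced.length_eq ha, ha⟩,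
      ⟨q.1.drop q.2, by rw [(hb.drop ha).length_eq]; dsimp only; omega, hb.drop ha⟩⟩
  invFun := fun ⟨i, ⟨u, hu, hub⟩, ⟨v, hv, hvb⟩⟩ =>
    ⟨(u ++ v, 2 * i), by simp only [List.length_append, hu, hv]; omega, hub.append hvb, by omega,
      by rwa [OnAxisAt, List.take_left' hu]⟩
  left_inv := fun ⟨q, hl, hb, ht, ha⟩ => by
    have hlen := IsBalanced.length_eq ha
    rw [List.length_take] at hlen
    refine Subtype.ext <| Prod.ext (List.take_append_drop _ _) ?_
    dsimp only
    omega
  right_inv := fun ⟨i, ⟨u, hu, hub⟩, ⟨v, hv, hvb⟩⟩ => by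
    have hi : u.count true = i := by rw [hub.length_eq] at hu; omega
    exact splitPath_ext (Fin.ext <| by simp [List.take_left' hu, hi]) (List.take_left' hu)
      (List.drop_left' hu)

theorem convolution_eq_marked_on_axis (n : ℕ) :
    ∑ i ∈ Finset.range (n + 1),
        Nat.choose (2 * i) i * Nat.choose (2 * (n - i)) (n - i) =
    Nat.card {q : UDPath × ℕ //
        q.1.length = 2 * n ∧ IsBalanced q.1 ∧ q.2 ≤ 2 * n ∧
          OnAxisAt q.1 q.2} := calc
  _ = ∑ i : Fin (n + 1), Nat.card (BalancedPath i × BalancedPath (n - i)) := by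
    simp [Finset.sum_range, Nat.card_prod, natCard_balancedPath]
  _ = Nat.card (Σ i : Fin (n + 1), BalancedPath i × BalancedPath (n - i)) := Nat.card_sigma.symm
  _ = _ := Nat.card_congr (markedPathEquivSigma n).symm
end

section
/- Let T_n be the set of ordered triples (A,B,C) of balanced up-down lattice paths with i, j, k up-steps respectively where i+j+k = n, and let D_n be the set of pairs (H,X) where H is a balanced up-down path of length 2n and X is one of its 2n+1 lattice points. Then |T_n| = |D_n|. -/
namespace TMPaux

open Finset

local notation "cb" => Nat.centralBinom

/-! ### Counting lists of booleans with prescribed counts -/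

/-- lists of Bool with given counts of `true` and `false` -/
def CB (a b : ℕ) : Type := {w : List Bool // w.count true = a ∧ w.count false = b}

lemma length_of_CB {a b : ℕ} (w : CB a b) : w.1.length = a + b := by
  obtain ⟨h1, h2⟩ := w.2
  have := List.count_true_add_count_false w.1
  omega

instance (a b : ℕ) : Finite (CB a b) := by
  have h : {l : List Bool | l.length = a + b}.Finite := List.finite_length_eq Bool (a+b)
  haveI := h.to_subtype
  exact Finite.of_injective
    (fun w : CB a b => (⟨w.1, length_of_CB w⟩ : {l : List Bool | l.length = a + b}))
    (fun x y h => Subtype.ext (by simpa using congrArg Subtype.val h))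

def uniqueCB0 (b : ℕ) : Unique (CB 0 b) := by
  refine ⟨⟨⟨List.replicate b false, by simp [List.count_replicate]⟩⟩, ?_⟩
  rintro ⟨w, h1, h2⟩
  apply Subtype.ext
  have hmem : ∀ x ∈ w, x = false := by
    intro x hx
    rcases x with _ | _
    · rfl
    · exact absurd hx (List.count_eq_zero.mp h1)
  have hl : w.length = b := by
    have := List.count_true_add_count_false w; omega
  exact List.eq_replicate_iff.mpr ⟨hl, hmem⟩

def uniqueCBtrue (a : ℕ) : Unique (CB a 0) := by
  refine ⟨⟨⟨List.replicate a true, by simp [List.count_replicate]⟩⟩, ?_⟩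
  rintro ⟨w, h1, h2⟩
  apply Subtype.ext
  have hmem : ∀ x ∈ w, x = true := by
    intro x hx
    rcases x with _ | _
    · exact absurd hx (List.count_eq_zero.mp h2)
    · rfl
  have hl : w.length = a := by
    have := List.count_true_add_count_false w; omega
  exact List.eq_replicate_iff.mpr ⟨hl, hmem⟩

def splitCB (a b : ℕ) : CB (a+1) (b+1) ≃ (CB a (b+1)) ⊕ (CB (a+1) b) where
  toFun w := match w with
    | ⟨[], h⟩ => absurd h.1 (by simp)
    | ⟨true :: t, h⟩ => Sum.inl ⟨t, by simp [List.count_cons] at h ⊢; omega⟩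
    | ⟨false :: t, h⟩ => Sum.inr ⟨t, by simp [List.count_cons] at h ⊢; omega⟩
  invFun s := match s with
    | Sum.inl t => ⟨true :: t.1, by simp [List.count_cons, t.2.1, t.2.2]⟩
    | Sum.inr t => ⟨false :: t.1, by simp [List.count_cons, t.2.1, t.2.2]⟩
  left_inv := by rintro ⟨(_ | ⟨(_|_), t⟩), h⟩
                 · exact absurd h.1 (by simp)
                 · rfl
                 · rfl
  right_inv := by rintro (⟨t, ht⟩ | ⟨t, ht⟩) <;> rfl

lemma cardCB (a : ℕ) : ∀ b : ℕ, Nat.card (CB a b) = (a+b).choose a := by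
  induction a with
  | zero =>
    intro b
    haveI := uniqueCB0 b
    simp [Nat.card_unique]
  | succ a ih =>
    intro b
    induction b with
    | zero =>
      haveI := uniqueCBtrue (a+1)
      simp [Nat.card_unique]
    | succ b ihb =>
      rw [Nat.card_congr (splitCB a b), Nat.card_sum, ih (b+1), ihb]
      have : a + 1 + (b + 1) = (a + (b+1)) + 1 := by omega
      rw [this, Nat.choose_succ_succ]
      congr 2
      omega

lemma cardCBdiag (i : ℕ) : Nat.card (CB i i) = cb i := by
  rw [cardCB, Nat.centralBinom]
  congr 1
  omega

/-! ### Structural decompositions -/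

def PairT (m : ℕ) : Type :=
  {p : UDPath × UDPath // IsBalanced p.1 ∧ IsBalanced p.2 ∧ p.1.count true + p.2.count true = m}

def TripleT (n : ℕ) : Type :=
  {p : UDPath × UDPath × UDPath //
      IsBalanced p.1 ∧ IsBalanced p.2.1 ∧ IsBalanced p.2.2 ∧
        p.1.count true + p.2.1.count true + p.2.2.count true = n}

def MarkT (n : ℕ) : Type :=
  {q : UDPath × ℕ // q.1.length = 2 * n ∧ IsBalanced q.1 ∧ q.2 ≤ 2 * n}

def pairFun (m : ℕ) (x : Σ i : Fin (m+1), CB i.1 i.1 × CB (m - i.1) (m - i.1)) : PairT m :=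
  ⟨(x.2.1.1, x.2.2.1), by
    obtain ⟨⟨i, hi⟩, ⟨w, hw1, hw2⟩, ⟨v, hv1, hv2⟩⟩ := x
    simp only [IsBalanced] at *
    refine ⟨hw1.trans hw2.symm, hv1.trans hv2.symm, ?_⟩
    show w.count true + v.count true = m
    omega⟩

lemma pairFun_bij (m : ℕ) : Function.Bijective (pairFun m) := by
  constructor
  · rintro ⟨⟨i, hi⟩, ⟨w, hw1, hw2⟩, ⟨v, hv1, hv2⟩⟩ ⟨⟨i', hi'⟩, ⟨w', hw1', hw2'⟩, ⟨v', hv1', hv2'⟩⟩ h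
    simp only [pairFun, Subtype.mk.injEq, Prod.mk.injEq] at h
    obtain ⟨rfl, rfl⟩ := h
    obtain rfl : i = i' := hw1.symm.trans hw1'
    rfl
  · rintro ⟨⟨w, v⟩, hb1, hb2, hs⟩
    simp only [IsBalanced] at hb1 hb2
    have hs' : w.count true + v.count true = m := hs
    refine ⟨⟨⟨w.count true, by omega⟩,
      ⟨w, rfl, hb1.symm⟩,
      ⟨v, show v.count true = m - w.count true by omega,
        show v.count false = m - w.count true by omega⟩⟩, rfl⟩

def tripleFun (n : ℕ) (x : Σ i : Fin (n+1), CB i.1 i.1 × PairT (n - i.1)) : TripleT n :=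
  ⟨(x.2.1.1, x.2.2.1.1, x.2.2.1.2), by
    obtain ⟨⟨i, hi⟩, ⟨w, hw1, hw2⟩, ⟨⟨p1, p2⟩, hb1, hb2, hs⟩⟩ := x
    refine ⟨hw1.trans hw2.symm, hb1, hb2, ?_⟩
    have hw1' : w.count true = i := hw1
    have hs' : p1.count true + p2.count true = n - i := hs
    have hi' : i < n + 1 := hi
    show w.count true + p1.count true + p2.count true = n
    omega⟩

lemma tripleFun_bij (n : ℕ) : Function.Bijective (tripleFun n) := by
  constructor
  · rintro ⟨⟨i, hi⟩, ⟨w, hw1, hw2⟩, ⟨⟨p1, p2⟩, hb1, hb2, hs⟩⟩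
      ⟨⟨i', hi'⟩, ⟨w', hw1', hw2'⟩, ⟨⟨p1', p2'⟩, hb1', hb2', hs'⟩⟩ h
    simp only [tripleFun, Subtype.mk.injEq, Prod.mk.injEq] at h
    obtain ⟨rfl, rfl, rfl⟩ := h
    obtain rfl : i = i' := hw1.symm.trans hw1'
    rfl
  · rintro ⟨⟨w, p1, p2⟩, hb, hb1, hb2, hs⟩
    simp only [IsBalanced] at hb
    have hs' : w.count true + p1.count true + p2.count true = n := hs
    refine ⟨⟨⟨w.count true, by omega⟩,
      ⟨w, rfl, hb.symm⟩,
      ⟨(p1, p2), hb1, hb2,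
        show p1.count true + p2.count true = n - w.count true by omega⟩⟩, rfl⟩

def markEquiv (n : ℕ) : MarkT n ≃ CB n n × Fin (2*n+1) where
  toFun q :=
    (⟨q.1.1, by
        obtain ⟨h1, h2, h3⟩ := q.2
        simp only [IsBalanced] at h2
        have := List.count_true_add_count_false q.1.1
        constructor <;> omega⟩,
      ⟨q.1.2, by obtain ⟨h1, h2, h3⟩ := q.2; omega⟩)
  invFun x :=
    ⟨(x.1.1, x.2.1), by
      obtain ⟨⟨w, hw1, hw2⟩, ⟨j, hj⟩⟩ := x
      refine ⟨?_, hw1.trans hw2.symm, show j ≤ 2*n by omega⟩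
      show w.length = 2 * n
      have := List.count_true_add_count_false w
      omega⟩
  left_inv := by rintro ⟨⟨w, j⟩, h⟩; rfl
  right_inv := by rintro ⟨⟨w, hw1, hw2⟩, ⟨j, hj⟩⟩; rfl

/-! ### Cardinality computations -/

lemma natCardSigma {m : ℕ} (f : Fin m → Type*) [∀ i, Finite (f i)] :
    Nat.card (Σ i, f i) = ∑ i, Nat.card (f i) := by
  letI : ∀ i, Fintype (f i) := fun i => Fintype.ofFinite _
  simp [Nat.card_eq_fintype_card, Fintype.card_sigma]

instance (m : ℕ) : Finite (PairT m) :=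
  Finite.of_equiv _ (Equiv.ofBijective _ (pairFun_bij m))

lemma cardPair (m : ℕ) :
    Nat.card (PairT m) = ∑ j ∈ range (m+1), cb j * cb (m-j) := by
  rw [← Nat.card_congr (Equiv.ofBijective _ (pairFun_bij m)), natCardSigma,
    Fin.sum_univ_eq_sum_range (fun i => Nat.card (CB i i × CB (m-i) (m-i)))]
  refine Finset.sum_congr rfl ?_
  intro j hj
  rw [Nat.card_prod, cardCBdiag, cardCBdiag]

lemma cardTriple (n : ℕ) :
    Nat.card (TripleT n) = ∑ i ∈ range (n+1), cb i * Nat.card (PairT (n-i)) := by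
  rw [← Nat.card_congr (Equiv.ofBijective _ (tripleFun_bij n)), natCardSigma,
    Fin.sum_univ_eq_sum_range (fun i => Nat.card (CB i i × PairT (n-i)))]
  refine Finset.sum_congr rfl ?_
  intro i hi
  rw [Nat.card_prod, cardCBdiag]

lemma cardMark (n : ℕ) : Nat.card (MarkT n) = (2*n+1) * cb n := by
  rw [Nat.card_congr (markEquiv n), Nat.card_prod, cardCBdiag]
  simp [Nat.card_eq_fintype_card, mul_comm]

/-! ### The arithmetic identity -/

lemma sum_reflect_weight (M : ℕ) :
    ∑ j ∈ range (M+1), (M - j) * (cb j * cb (M-j)) =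
      ∑ j ∈ range (M+1), j * (cb j * cb (M-j)) := by
  have h := Finset.sum_range_reflect (fun j => j * (cb j * cb (M-j))) (M+1)
  rw [← h]
  refine Finset.sum_congr rfl ?_
  intro j hj
  rw [Finset.mem_range] at hj
  have h1 : M + 1 - 1 - j = M - j := by omega
  have h2 : M - (M - j) = j := by omega
  rw [h1, h2, mul_comm (cb j) (cb (M - j))]

lemma two_mul_weight (M : ℕ) :
    2 * ∑ j ∈ range (M+1), (M - j) * (cb j * cb (M-j)) =
      M * ∑ j ∈ range (M+1), cb j * cb (M-j) := by
  rw [two_mul]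
  nth_rewrite 2 [sum_reflect_weight]
  rw [← Finset.sum_add_distrib, Finset.mul_sum]
  refine Finset.sum_congr rfl ?_
  intro j hj
  rw [Finset.mem_range] at hj
  have h3 : M - j + j = M := by omega
  rw [← add_mul, h3]

lemma conv_eq_four_pow (M : ℕ) :
    ∑ j ∈ range (M+1), cb j * cb (M-j) = 4 ^ M := by
  induction M with
  | zero => simp [Nat.centralBinom]
  | succ m ih =>
    have hW : ∑ j ∈ range (m+2), (m+1-j) * (cb j * cb (m+1-j)) =
        ∑ j ∈ range (m+1), (4*((m-j)*(cb j * cb (m-j))) + 2*(cb j * cb (m-j))) := by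
      rw [Finset.sum_range_succ]
      simp only [Nat.sub_self, zero_mul, add_zero]
      refine Finset.sum_congr rfl ?_
      intro j hj
      rw [Finset.mem_range] at hj
      have e1 : m + 1 - j = (m-j) + 1 := by omega
      rw [e1]
      have e2 : ((m-j)+1) * (cb j * cb ((m-j)+1)) = cb j * (((m-j)+1) * cb ((m-j)+1)) := by ring
      rw [e2, Nat.succ_mul_centralBinom_succ (m-j)]
      ring
    have key : (m+1) * ∑ j ∈ range (m+2), cb j * cb (m+1-j) =
        (m+1) * (4 * ∑ j ∈ range (m+1), cb j * cb (m-j)) := by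
      rw [← two_mul_weight (m+1), hW]
      rw [Finset.sum_add_distrib, ← Finset.mul_sum, ← Finset.mul_sum]
      have h4 : 2*(2 * ∑ j ∈ range (m+1), (m-j)*(cb j * cb (m-j)))
          = 2*(m * ∑ j ∈ range (m+1), cb j * cb (m-j)) := by rw [two_mul_weight m]
      set A := ∑ j ∈ range (m+1), (m-j)*(cb j * cb (m-j)) with hA
      set S := ∑ j ∈ range (m+1), cb j * cb (m-j) with hS
      have h5 : 2*(2*A) = 2*(m*S) := h4
      calc 2*(4*A + 2*S) = 2*(2*(2*A)) + 4*S := by ring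
        _ = 2*(2*(m*S)) + 4*S := by rw [h5]
        _ = (m+1)*(4*S) := by ring
    have := Nat.eq_of_mul_eq_mul_left (Nat.succ_pos m) key
    rw [this, ih, pow_succ]
    ring

lemma sum_cb_four_pow (n : ℕ) :
    ∑ i ∈ range (n+1), cb i * 4 ^ (n-i) = (2*n+1) * cb n := by
  induction n with
  | zero => simp [Nat.centralBinom]
  | succ n ih =>
    rw [Finset.sum_range_succ]
    have e0 : n + 1 - (n+1) = 0 := by omega
    rw [e0, pow_zero, mul_one]
    have e1 : ∑ i ∈ range (n+1), cb i * 4 ^ (n+1-i) =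
        4 * ∑ i ∈ range (n+1), cb i * 4 ^ (n-i) := by
      rw [Finset.mul_sum]
      refine Finset.sum_congr rfl ?_
      intro i hi
      rw [Finset.mem_range] at hi
      have : n + 1 - i = (n - i) + 1 := by omega
      rw [this, pow_succ]
      ring
    rw [e1, ih]
    have h := Nat.succ_mul_centralBinom_succ n
    set x := cb n
    set y := cb (n+1)
    calc 4 * ((2*n+1) * x) + y = 2*(2*(2*n+1)*x) + y := by ring
      _ = 2*((n+1)*y) + y := by rw [h]
      _ = (2*(n+1)+1) * y := by ring

lemma main (n : ℕ) : Nat.card (TripleT n) = Nat.card (MarkT n) := by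
  rw [cardTriple, cardMark]
  rw [← sum_cb_four_pow n]
  refine Finset.sum_congr rfl ?_
  intro i hi
  rw [cardPair]
  have : n - i + 1 = (n - i) + 1 := rfl
  rw [conv_eq_four_pow (n - i)]

end TMPaux

theorem triples_eq_marked_paths (n : ℕ) :
    Nat.card {p : UDPath × UDPath × UDPath //
        IsBalanced p.1 ∧ IsBalanced p.2.1 ∧ IsBalanced p.2.2 ∧
          p.1.count true + p.2.1.count true + p.2.2.count true = n} =
    Nat.card {q : UDPath × ℕ //
        q.1.length = 2 * n ∧ IsBalanced q.1 ∧ q.2 ≤ 2 * n} := by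
  exact TMPaux.main n
end

section
/- Let J_n be the set of triples (A,B,C) of balanced up-down paths with n total up steps such that either (B ends with a down step, C is nonempty and lies entirely weakly below the horizontal axis) or (B ends with an up step, C is nonempty and lies entirely weakly above the horizontal axis). Let I_n be the set of triples (A,B,C) with B empty and C having both a point strictly above and a point strictly below the horizontal axis. Then |J_n| = |I_n|. -/
/-- Some lattice point of the path is strictly above its starting height. -/
def HasPointAbove (w : UDPath) : Prop :=
  ∃ t, t ≤ w.length ∧ (w.take t).count false < (w.take t).count true

/-- Some lattice point of the path is strictly below its starting height. -/
def HasPointBelow (w : UDPath) : Prop :=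
  ∃ t, t ≤ w.length ∧ (w.take t).count true < (w.take t).count false

/-- Every lattice point of the path is weakly below its starting height. -/
def WeaklyBelow (w : UDPath) : Prop :=
  ∀ t, t ≤ w.length → (w.take t).count true ≤ (w.take t).count false

/-- Every lattice point of the path is weakly above its starting height. -/
def WeaklyAbove (w : UDPath) : Prop :=
  ∀ t, t ≤ w.length → (w.take t).count false ≤ (w.take t).count true

namespace UDPath

def height (w : UDPath) (t : ℕ) : ℤ :=
  (w.take t).count true - (w.take t).count false

variable {w B C : UDPath} {s t : ℕ}

lemma isBalanced_iff_height_length : IsBalanced w ↔ height w w.length = 0 := by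
  simp only [IsBalanced, height, List.take_length, sub_eq_zero, Nat.cast_inj]

lemma weaklyBelow_iff_height : WeaklyBelow w ↔ ∀ t ≤ w.length, height w t ≤ 0 := by
  simp only [WeaklyBelow, height, sub_nonpos, Nat.cast_le]

lemma hasPointAbove_iff_height : HasPointAbove w ↔ ∃ t ≤ w.length, 0 < height w t := by
  simp only [HasPointAbove, height, sub_pos, Nat.cast_lt]

lemma hasPointBelow_iff_height : HasPointBelow w ↔ ∃ t ≤ w.length, height w t < 0 := by
  simp only [HasPointBelow, height, sub_neg, Nat.cast_lt]

lemma height_succ {b : Bool} (h : w[t]? = some b) :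
    height w (t + 1) = height w t + if b then 1 else -1 := by
  cases b <;> simp [height, List.take_add_one, h] <;> ring

lemma height_take (h : t ≤ s) : height (w.take s) t = height w t := by
  rw [height, List.take_take, min_eq_left h, height]

lemma height_drop (w : UDPath) (s t : ℕ) :
    height (w.drop s) t = height w (s + t) - height w s := by
  simp only [height, List.take_add, List.count_append]
  push_cast
  ring

lemma height_append_of_le (C : UDPath) (h : t ≤ B.length) : height (B ++ C) t = height B t := by
  rw [height, List.take_append_of_le_length h, height]

lemma height_append_length_add (hB : IsBalanced B) (C : UDPath) (t : ℕ) :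
    height (B ++ C) (B.length + t) = height C t := by
  have := height_drop (B ++ C) B.length t
  rw [List.drop_left, height_append_of_le C le_rfl,
    isBalanced_iff_height_length.mp hB, sub_zero] at this
  exact this.symm

lemma height_map_not (w : UDPath) (t : ℕ) : height (w.map not) t = -height w t := by
  simp only [height, ← List.map_take]
  rw [← Bool.not_false, List.count_map_of_injective _ _ Bool.not_injective, ← Bool.not_true,
    List.count_map_of_injective _ _ Bool.not_injective]
  simp only [Bool.not_true, Bool.not_false]
  ring

lemma isBalanced_append (hB : IsBalanced B) (hC : IsBalanced C) : IsBalanced (B ++ C) := by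
  simp only [IsBalanced, List.count_append] at *
  omega

lemma isBalanced_map_not_iff : IsBalanced (w.map not) ↔ IsBalanced w := by
  simp [isBalanced_iff_height_length, height_map_not]

lemma weaklyBelow_map_not_iff : WeaklyBelow (w.map not) ↔ WeaklyAbove w := by
  simp only [weaklyBelow_iff_height, height_map_not, List.length_map, neg_nonpos]
  simp only [WeaklyAbove, height, sub_nonneg, Nat.cast_le]

lemma hasPointAbove_map_not_iff : HasPointAbove (w.map not) ↔ HasPointBelow w := by
  simp [hasPointAbove_iff_height, hasPointBelow_iff_height, height_map_not]

lemma hasPointBelow_map_not_iff : HasPointBelow (w.map not) ↔ HasPointAbove w := by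
  simp [hasPointAbove_iff_height, hasPointBelow_iff_height, height_map_not]

lemma height_length_sub_one (hw : IsBalanced w) {b : Bool} (h : w.getLast? = some b) :
    height w (w.length - 1) = if b then -1 else 1 := by
  have hpos : 0 < w.length := List.length_pos_iff.mpr (by rintro rfl; simp at h)
  have hstep := height_succ (List.getLast?_eq_getElem? ▸ h)
  rw [Nat.sub_add_cancel hpos, isBalanced_iff_height_length.mp hw] at hstep
  cases b <;> simp at hstep ⊢ <;> omega

lemma getLast?_eq_some_true_of_weaklyBelow (hw : IsBalanced w) (hne : w ≠ [])
    (hbelow : WeaklyBelow w) : w.getLast? = some true := by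
  have hlast := List.getLast?_eq_some_getLast hne
  cases hb : w.getLast hne <;> rw [hb] at hlast
  · have := weaklyBelow_iff_height.mp hbelow _ (Nat.sub_le _ 1)
    simp [height_length_sub_one hw hlast] at this
  · exact hlast

structure IsLowerSplit (B C : UDPath) : Prop where
  isBalanced_left : IsBalanced B
  isBalanced_right : IsBalanced C
  getLast?_left : B.getLast? = some false
  right_ne_nil : C ≠ []
  weaklyBelow_right : WeaklyBelow C

lemma isLowerSplit_iff : IsLowerSplit B C ↔
    IsBalanced B ∧ IsBalanced C ∧ B.getLast? = some false ∧ C ≠ [] ∧ WeaklyBelow C :=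
  ⟨fun ⟨hB, hC, hlast, hne, hbelow⟩ => ⟨hB, hC, hlast, hne, hbelow⟩,
    fun ⟨hB, hC, hlast, hne, hbelow⟩ => ⟨hB, hC, hlast, hne, hbelow⟩⟩

namespace IsLowerSplit

variable {B' C' : UDPath}

lemma height_append_length_sub_one (h : IsLowerSplit B C) :
    height (B ++ C) (B.length - 1) = 1 := by
  rw [height_append_of_le C (Nat.sub_le _ 1),
    height_length_sub_one h.isBalanced_left h.getLast?_left]
  rfl

lemma height_append_nonpos (h : IsLowerSplit B C) (h₁ : B.length ≤ t)
    (h₂ : t ≤ (B ++ C).length) : height (B ++ C) t ≤ 0 := by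
  obtain ⟨u, rfl⟩ := Nat.exists_eq_add_of_le h₁
  rw [height_append_length_add h.isBalanced_left]
  exact weaklyBelow_iff_height.mp h.weaklyBelow_right u (by simpa using h₂)

lemma getLast?_append (h : IsLowerSplit B C) : (B ++ C).getLast? = some true := by
  rw [List.getLast?_append_of_ne_nil B h.right_ne_nil]
  exact getLast?_eq_some_true_of_weaklyBelow h.isBalanced_right h.right_ne_nil
    h.weaklyBelow_right

lemma hasPointAbove_append (h : IsLowerSplit B C) : HasPointAbove (B ++ C) :=
  hasPointAbove_iff_height.mpr
    ⟨B.length - 1, by simp; omega, by rw [h.height_append_length_sub_one]; exact one_pos⟩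

lemma hasPointBelow_append (h : IsLowerSplit B C) : HasPointBelow (B ++ C) := by
  have hlast := height_length_sub_one
    (isBalanced_append h.isBalanced_left h.isBalanced_right) h.getLast?_append
  exact hasPointBelow_iff_height.mpr ⟨_, Nat.sub_le _ 1, by rw [hlast]; exact neg_one_lt_zero⟩

lemma length_le (h : IsLowerSplit B C) (h' : IsLowerSplit B' C') (hD : B ++ C = B' ++ C') :
    B.length ≤ B'.length := by
  by_contra! hlt
  have hpos := h.height_append_length_sub_one
  have hnonpos := h'.height_append_nonpos (t := B.length - 1) (by omega)
    (by rw [← hD]; simp; omega)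
  rw [← hD] at hnonpos
  omega

lemma unique (h : IsLowerSplit B C) (h' : IsLowerSplit B' C') (hD : B ++ C = B' ++ C') :
    B = B' ∧ C = C' :=
  List.append_inj hD (le_antisymm (h.length_le h' hD) (h'.length_le h hD.symm))

end IsLowerSplit

section LastDescent

variable {D : UDPath}

lemma exists_last_descent (hD : IsBalanced D) (habove : HasPointAbove D)
    (hlast : D.getLast? = some true) :
    ∃ s, s + 1 < D.length ∧ D[s]? = some false ∧ height D (s + 1) = 0 ∧
      ∀ t, s < t → t ≤ D.length → height D t ≤ 0 := by
  classical
  obtain ⟨t₀, ht₀, hpos₀⟩ := hasPointAbove_iff_height.mp habove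
  set s := Nat.findGreatest (fun t => 0 < height D t) D.length
  have hs : 0 < height D s := Nat.findGreatest_spec (P := fun t => 0 < height D t) ht₀ hpos₀
  have hafter : ∀ t, s < t → t ≤ D.length → height D t ≤ 0 := fun t h₁ h₂ =>
    not_lt.mp (Nat.findGreatest_is_greatest h₁ h₂)
  have hend := isBalanced_iff_height_length.mp hD
  have hs_lt : s < D.length :=
    (Nat.findGreatest_le _).lt_of_ne fun h => by
      rw [show s = D.length from h, hend] at hs
      exact hs.false
  have hstep := height_succ (List.getElem?_eq_getElem hs_lt)
  have hnext := hafter (s + 1) (Nat.lt_succ_self s) hs_lt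
  have hdown : D[s] = false := by
    cases hb : D[s]
    · rfl
    · simp [hb] at hstep; omega
  have hpen := height_length_sub_one hD hlast
  refine ⟨s, ?_, hdown ▸ List.getElem?_eq_getElem hs_lt, ?_, hafter⟩
  · by_contra! h
    have : s = D.length - 1 := by omega
    simp only [this, if_true] at hs hpen
    omega
  · simp [hdown] at hstep
    omega

lemma isLowerSplit_take_drop (hD : IsBalanced D) (hs : s + 1 < D.length)
    (hstep : D[s]? = some false) (hzero : height D (s + 1) = 0)
    (hafter : ∀ t, s < t → t ≤ D.length → height D t ≤ 0) :
    IsLowerSplit (D.take (s + 1)) (D.drop (s + 1)) := by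
  have hlen : (D.take (s + 1)).length = s + 1 := List.length_take_of_le hs.le
  refine ⟨?_, ?_, ?_, ?_, ?_⟩
  · rw [isBalanced_iff_height_length, hlen, height_take le_rfl, hzero]
  · rw [isBalanced_iff_height_length, height_drop, List.length_drop, Nat.add_sub_cancel' hs.le,
      isBalanced_iff_height_length.mp hD, hzero, sub_zero]
  · rw [List.getLast?_eq_getElem?, hlen, Nat.add_sub_cancel,
      List.getElem?_take_of_lt (Nat.lt_succ_self s)]
    exact hstep
  · simpa [List.drop_eq_nil_iff] using hs
  · refine weaklyBelow_iff_height.mpr fun t ht => ?_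
    rw [height_drop, hzero, sub_zero]
    exact hafter _ (by omega) (by simp at ht; omega)

lemma exists_isLowerSplit (hD : IsBalanced D) (habove : HasPointAbove D)
    (hlast : D.getLast? = some true) : ∃ B C, IsLowerSplit B C ∧ B ++ C = D := by
  obtain ⟨s, hs, hstep, hzero, hafter⟩ := exists_last_descent hD habove hlast
  exact ⟨_, _, isLowerSplit_take_drop hD hs hstep hzero hafter, List.take_append_drop _ _⟩

end LastDescent

def IsCorrectionSplit (B C : UDPath) : Prop :=
  IsBalanced B ∧ IsBalanced C ∧
    ((B.getLast? = some false ∧ C ≠ [] ∧ WeaklyBelow C) ∨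
      (B.getLast? = some true ∧ C ≠ [] ∧ WeaklyAbove C))

lemma getLast?_map_not_eq_some_iff {b : Bool} :
    (w.map not).getLast? = some b ↔ w.getLast? = some !b := by
  rw [List.getLast?_map]
  cases w.getLast? <;> simp [Bool.not_eq_eq_eq_not]

lemma isCorrectionSplit_iff :
    IsCorrectionSplit B C ↔ IsLowerSplit B C ∨ IsLowerSplit (B.map not) (C.map not) := by
  simp only [IsCorrectionSplit, isLowerSplit_iff, isBalanced_map_not_iff,
    getLast?_map_not_eq_some_iff, weaklyBelow_map_not_iff, ne_eq, List.map_eq_nil_iff,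
    Bool.not_false]
  tauto

namespace IsCorrectionSplit

variable {B' C' : UDPath}

lemma hasPointAbove_append (h : IsCorrectionSplit B C) : HasPointAbove (B ++ C) := by
  rcases isCorrectionSplit_iff.mp h with h | h
  · exact h.hasPointAbove_append
  · simpa [← List.map_append, hasPointBelow_map_not_iff] using h.hasPointBelow_append

lemma hasPointBelow_append (h : IsCorrectionSplit B C) : HasPointBelow (B ++ C) := by
  rcases isCorrectionSplit_iff.mp h with h | h
  · exact h.hasPointBelow_append
  · simpa [← List.map_append, hasPointAbove_map_not_iff] using h.hasPointAbove_append

lemma unique (h : IsCorrectionSplit B C) (h' : IsCorrectionSplit B' C')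
    (hD : B ++ C = B' ++ C') : B = B' ∧ C = C' := by
  have hD_map : B.map not ++ C.map not = B'.map not ++ C'.map not := by
    simp only [← List.map_append, hD]
  have hinj := List.map_injective_iff.mpr Bool.not_injective
  rcases isCorrectionSplit_iff.mp h with h | h <;>
    rcases isCorrectionSplit_iff.mp h' with h' | h'
  · exact h.unique h' hD
  · have := h'.getLast?_append
    rw [← hD_map, ← List.map_append, getLast?_map_not_eq_some_iff, h.getLast?_append] at this
    simp at this
  · have := h.getLast?_append
    rw [hD_map, ← List.map_append, getLast?_map_not_eq_some_iff, h'.getLast?_append] at this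
    simp at this
  · obtain ⟨hB, hC⟩ := h.unique h' hD_map
    exact ⟨hinj hB, hinj hC⟩

end IsCorrectionSplit

lemma exists_isCorrectionSplit {D : UDPath} (hD : IsBalanced D) (habove : HasPointAbove D)
    (hbelow : HasPointBelow D) : ∃ B C, IsCorrectionSplit B C ∧ B ++ C = D := by
  have hne : D ≠ [] := by
    rintro rfl
    simp [HasPointAbove] at habove
  have hlast := List.getLast?_eq_some_getLast hne
  cases hb : D.getLast hne <;> rw [hb] at hlast
  · obtain ⟨B, C, hsplit, hBC⟩ := exists_isLowerSplit (isBalanced_map_not_iff.mpr hD)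
      (hasPointAbove_map_not_iff.mpr hbelow) (getLast?_map_not_eq_some_iff.mpr hlast)
    refine ⟨B.map not, C.map not, isCorrectionSplit_iff.mpr (Or.inr ?_), ?_⟩
    · simpa [Function.comp_def] using hsplit
    · simpa [Function.comp_def] using congrArg (List.map not) hBC
  · obtain ⟨B, C, hsplit, hBC⟩ := exists_isLowerSplit hD habove hlast
    exact ⟨B, C, isCorrectionSplit_iff.mpr (Or.inl hsplit), hBC⟩

end UDPath

open UDPath in
theorem correction_step_count (n : ℕ) :
    Nat.card {p : UDPath × UDPath × UDPath //
        IsBalanced p.1 ∧ IsBalanced p.2.1 ∧ IsBalanced p.2.2 ∧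
        p.1.count true + p.2.1.count true + p.2.2.count true = n ∧
        ((p.2.1.getLast? = some false ∧ p.2.2 ≠ [] ∧ WeaklyBelow p.2.2) ∨
          (p.2.1.getLast? = some true ∧ p.2.2 ≠ [] ∧ WeaklyAbove p.2.2))} =
    Nat.card {p : UDPath × UDPath × UDPath //
        IsBalanced p.1 ∧ IsBalanced p.2.1 ∧ IsBalanced p.2.2 ∧
        p.1.count true + p.2.1.count true + p.2.2.count true = n ∧
        p.2.1 = [] ∧ HasPointAbove p.2.2 ∧ HasPointBelow p.2.2} := by
  apply Nat.card_congr
  refine Equiv.ofBijective (fun ⟨(A, B, C), hA, hB, hC, hn, hsplit⟩ =>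
    ⟨(A, [], B ++ C), hA, rfl, isBalanced_append hB hC, by simpa [add_assoc] using hn, rfl,
      IsCorrectionSplit.hasPointAbove_append ⟨hB, hC, hsplit⟩,
      IsCorrectionSplit.hasPointBelow_append ⟨hB, hC, hsplit⟩⟩) ⟨?_, ?_⟩
  · rintro ⟨⟨A, B, C⟩, _, hB, hC, _, hsplit⟩
      ⟨⟨A', B', C'⟩, _, hB', hC', _, hsplit'⟩ heq
    simp only [Subtype.mk.injEq, Prod.mk.injEq, true_and] at heq
    obtain ⟨rfl, hD⟩ := heq
    obtain ⟨rfl, rfl⟩ :=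
      IsCorrectionSplit.unique ⟨hB, hC, hsplit⟩ ⟨hB', hC', hsplit'⟩ hD
    rfl
  · rintro ⟨⟨A, B₀, D⟩, hA, _, hD, hn, hB₀ : B₀ = [], habove, hbelow⟩
    obtain ⟨B, C, ⟨hB, hC, hsplit⟩, rfl⟩ := exists_isCorrectionSplit hD habove hbelow
    refine ⟨⟨(A, B, C), hA, hB, hC, ?_, hsplit⟩, Subtype.ext ?_⟩
    · simpa [hB₀, add_assoc] using hn
    · simp [hB₀]
end

section
/- For every non-negative integer n, sum_{m=0}^{n} binom(2m, m) * 4^{n-m} = (2n+1) * binom(2n, n). -/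
/-! Both sides satisfy `a (n + 1) = 4 * a n + centralBinom (n + 1)`: the left side by splitting off
the last term, the right side by `(n + 1) * centralBinom (n + 1) = 2 * (2 * n + 1) * centralBinom n`. -/

open Finset

theorem Finset.sum_range_succ_mul_pow_sub_succ {R : Type*} [CommSemiring R] (f : ℕ → R) (a : R)
    (n : ℕ) :
    ∑ m ∈ range (n + 2), f m * a ^ (n + 1 - m) =
      a * ∑ m ∈ range (n + 1), f m * a ^ (n - m) + f (n + 1) := by
  rw [← Nat.sum_antidiagonal_eq_sum_range_succ (fun i j ↦ f i * a ^ j),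
    ← Nat.sum_antidiagonal_eq_sum_range_succ (fun i j ↦ f i * a ^ j),
    Nat.sum_antidiagonal_succ', mul_sum]
  simp only [pow_zero, mul_one, pow_succ]
  rw [add_comm]
  congr 1
  exact sum_congr rfl fun p _ ↦ by ring

theorem Nat.two_mul_succ_add_one_mul_centralBinom_succ (n : ℕ) :
    (2 * (n + 1) + 1) * centralBinom (n + 1) =
      4 * ((2 * n + 1) * centralBinom n) + centralBinom (n + 1) := by
  linarith [succ_mul_centralBinom_succ n]

theorem central_binomial_partial_sum (n : ℕ) :
    ∑ m ∈ Finset.range (n + 1), Nat.choose (2 * m) m * 4 ^ (n - m) =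
      (2 * n + 1) * Nat.choose (2 * n) n := by
  simp only [← Nat.centralBinom_eq_two_mul_choose]
  induction n with
  | zero => simp
  | succ n ih =>
    rw [sum_range_succ_mul_pow_sub_succ, ih, Nat.two_mul_succ_add_one_mul_centralBinom_succ]
end
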